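/- The 4×4 Rook's graph and the Shrikhande graph are not isomorphic, because the neighborhood of every vertex in the Rook's graph induces a subgraph with two connected components (two triangles), while the neighborhood of every vertex in the Shrikhande graph induces a connected subgraph (a 6-cycle). -/

import Mathlib

/-- The 4×4 Rook's graph. -/
def rookGraph : SimpleGraph (Fin 4 × Fin 4) where
  Adj p q := p ≠ q ∧ (p.1 = q.1 ∨ p.2 = q.2)
  symm := by
    constructor
    intro p q h
    exact ⟨h.1.symm, h.2.imp Eq.symm Eq.symm⟩
  loopless := by
    constructor
    intro p h
    exact h.1 rfl

/-- The Shrikhande graph. -/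
def shrikhandeGraph : SimpleGraph (ZMod 4 × ZMod 4) where
  Adj u v := u - v = (1,0) ∨ u - v = (3,0) ∨ u - v = (0,1) ∨ u - v = (0,3) ∨
    u - v = (1,1) ∨ u - v = (3,3)
  symm := by constructor; intro u v h; revert h; revert v; revert u; decide
  loopless := by constructor; intro u; revert u; decide

/-!
In the rook's graph the neighbours of a vertex are the other three vertices of its row and of its
column, which induce two disjoint triangles. The Shrikhande graph is a Cayley graph of
`(ZMod 4)²`, so translations are automorphisms and it suffices to look at the neighbourhood of `0`:
it is the hexagon `(1,0), (1,1), (0,1), (3,0), (3,3), (0,3)`, hence connected. An isomorphism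
would restrict to an isomorphism of vertex neighbourhoods, which preserves the number of connected
components.
-/

instance : DecidableRel rookGraph.Adj := fun p q =>
  inferInstanceAs (Decidable (p ≠ q ∧ (p.1 = q.1 ∨ p.2 = q.2)))

instance : DecidableRel shrikhandeGraph.Adj := fun _ _ =>
  inferInstanceAs (Decidable (_ ∨ _ ∨ _ ∨ _ ∨ _ ∨ _))

namespace SimpleGraph

variable {V W : Type*} {G : SimpleGraph V} {H : SimpleGraph W}

def Iso.induceNeighborSet (f : G ≃g H) (v : V) :
    G.induce (G.neighborSet v) ≃g H.induce (H.neighborSet (f v)) :=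
  f.induce (f.toEquiv.bijOn fun _ ↦ f.apply_mem_neighborSet_iff)

theorem Connected.nat_card_connectedComponent (hG : G.Connected) :
    Nat.card G.ConnectedComponent = 1 :=
  have := hG.nonempty
  have := hG.preconnected.subsingleton_connectedComponent
  Nat.card_unique

end SimpleGraph

def shrikhandeAddRightIso (c : ZMod 4 × ZMod 4) : shrikhandeGraph ≃g shrikhandeGraph where
  toEquiv := Equiv.addRight c
  map_rel_iff' := by simp [shrikhandeGraph]

theorem rookGraph_nat_card_connectedComponent_induce_neighborSet (a : Fin 4 × Fin 4) :
    Nat.card (rookGraph.induce (rookGraph.neighborSet a)).ConnectedComponent = 2 := by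
  rw [Nat.card_eq_fintype_card]
  revert a
  decide

theorem shrikhandeGraph_connected_induce_neighborSet_zero :
    (shrikhandeGraph.induce (shrikhandeGraph.neighborSet 0)).Connected := by
  decide

theorem shrikhandeGraph_connected_induce_neighborSet (a : ZMod 4 × ZMod 4) :
    (shrikhandeGraph.induce (shrikhandeGraph.neighborSet a)).Connected := by
  have h := ((shrikhandeAddRightIso a).induceNeighborSet 0).connected_iff.mp
    shrikhandeGraph_connected_induce_neighborSet_zero
  rwa [show shrikhandeAddRightIso a 0 = a from zero_add a] at h

/-- The Rook's graph and the Shrikhande graph are not isomorphic: every vertex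
neighborhood of the Rook's graph induces a subgraph with two connected
components, every vertex neighborhood of the Shrikhande graph induces a
connected subgraph, and there is no graph isomorphism between them. -/
theorem rook_not_iso_shrikhande :
    (∀ a : Fin 4 × Fin 4,
      Nat.card (rookGraph.induce (rookGraph.neighborSet a)).ConnectedComponent = 2) ∧
    (∀ a : ZMod 4 × ZMod 4,
      (shrikhandeGraph.induce (shrikhandeGraph.neighborSet a)).Connected) ∧
    ¬ Nonempty (rookGraph ≃g shrikhandeGraph) := by
  refine ⟨rookGraph_nat_card_connectedComponent_induce_neighborSet,
    shrikhandeGraph_connected_induce_neighborSet, ?_⟩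
  rintro ⟨f⟩
  have h := Nat.card_congr (f.induceNeighborSet 0).connectedComponentEquiv
  rw [rookGraph_nat_card_connectedComponent_induce_neighborSet,
    (shrikhandeGraph_connected_induce_neighborSet (f 0)).nat_card_connectedComponent] at h
  exact absurd h (by decide)
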